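/- Let g_1,…,g_S ∈ ℝ^d and let λ* minimize ‖Σ_s λ_s g_s‖² over the probability simplex, with d* = Σ_s λ*_s g_s ≠ 0. Then ⟨g_s, d*⟩ ≥ ‖d*‖² > 0 for all s ∈ [S]; in particular, −d* is a common descent direction: ⟨g_s, −d*⟩ < 0 for all s. -/
import Mathlib


open scoped InnerProductSpace

theorem stmt6 {d S : ℕ} (g : Fin S → EuclideanSpace ℝ (Fin d))
    (lam : Fin S → ℝ) (hpos : ∀ s, 0 ≤ lam s) (hsum : ∑ s, lam s = 1)
    (hmin : ∀ lam' : Fin S → ℝ, (∀ s, 0 ≤ lam' s) → (∑ s, lam' s = 1) →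
      ‖∑ s, lam s • g s‖ ^ 2 ≤ ‖∑ s, lam' s • g s‖ ^ 2)
    (hne : ∑ s, lam s • g s ≠ 0) :
    (∀ s, ‖∑ s', lam s' • g s'‖ ^ 2 ≤ ⟪g s, ∑ s', lam s' • g s'⟫_ℝ) ∧
    0 < ‖∑ s', lam s' • g s'‖ ^ 2 ∧
    ∀ s, ⟪g s, -(∑ s', lam s' • g s')⟫_ℝ < 0 := by
  set D := ∑ s', lam s' • g s' with hD
  have hDpos : 0 < ‖D‖ ^ 2 := pow_pos (norm_pos_iff.mpr hne) 2
  have key : ∀ s, ‖D‖ ^ 2 ≤ ⟪g s, D⟫_ℝ := by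
    intro s
    have hc : ∀ t : ℝ, 0 < t → t ≤ 1 →
        0 ≤ 2 * t * ⟪D, g s - D⟫_ℝ + t ^ 2 * ‖g s - D‖ ^ 2 := by
      intro t ht ht1
      have hfeas : ‖D‖ ^ 2 ≤ ‖∑ s', ((1 - t) * lam s' + t * (if s' = s then 1 else 0)) • g s'‖ ^ 2 := by
        apply hmin
        · intro s'
          have h1 : (0:ℝ) ≤ 1 - t := by linarith
          have h2 := hpos s'
          split_ifs <;> nlinarith
        · rw [Finset.sum_add_distrib, ← Finset.mul_sum, ← Finset.mul_sum, hsum]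
          simp
      have hsum' : (∑ s', ((1 - t) * lam s' + t * (if s' = s then 1 else 0)) • g s')
          = D + t • (g s - D) := by
        simp only [add_smul, mul_smul, Finset.sum_add_distrib, ← Finset.smul_sum]
        rw [show (∑ s', (if s' = s then (1:ℝ) else 0) • g s') = g s by
          simp [ite_smul, Finset.sum_ite_eq']]
        rw [← hD]
        module
      rw [hsum', @norm_add_sq_real] at hfeas
      rw [real_inner_smul_right, norm_smul, Real.norm_eq_abs, abs_of_pos ht] at hfeas
      nlinarith [hfeas]
    have hc0 : 0 ≤ ⟪D, g s - D⟫_ℝ := by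
      by_contra h
      push_neg at h
      set c := ⟪D, g s - D⟫_ℝ
      set B := ‖g s - D‖ ^ 2 with hB
      have hB0 : 0 ≤ B := by positivity
      have ht : 0 < min 1 ((-c) / (B + 1)) := by
        apply lt_min one_pos
        apply div_pos (by linarith) (by linarith)
      have := hc (min 1 ((-c) / (B + 1))) ht (min_le_left _ _)
      have hle : min 1 ((-c) / (B + 1)) ≤ (-c) / (B + 1) := min_le_right _ _
      set t := min 1 ((-c) / (B + 1))
      have htB : t * (B + 1) ≤ -c := by
        rw [← le_div_iff₀ (by linarith)] at *
        exact hle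
      nlinarith [sq_nonneg t, ht.le]
    rw [inner_sub_right, real_inner_self_eq_norm_sq, real_inner_comm] at hc0
    linarith
  refine ⟨key, hDpos, fun s => ?_⟩
  rw [inner_neg_right]
  have := key s
  linarith
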